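/- For all reals η > 0 and b > 0, ∫_0^∞ x · log(1 + b·x) · e^{−ηx} dx = (1/η² − 1/(bη)) · e^{η/b} · E₁(η/b) + 1/η². -/

import Mathlib

open MeasureTheory Real Set Filter

/-- The exponential integral `E₁(x) = ∫ₓ^∞ e^{-t}/t dt`. -/
noncomputable def E1 (x : ℝ) : ℝ := ∫ t in Set.Ioi x, Real.exp (-t) / t

lemma tendsto_pow_exp_aux (n : ℕ) {c : ℝ} (hc : 0 < c) :
    Tendsto (fun x : ℝ => x ^ n * Real.exp (-(c * x))) atTop (nhds 0) := by
  have h := ((tendsto_pow_mul_exp_neg_atTop_nhds_zero n).comp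
      (tendsto_id.const_mul_atTop hc)).div_const (c ^ n)
  rw [zero_div] at h
  refine h.congr fun x => ?_
  simp only [Function.comp, id_eq, mul_pow]
  field_simp

lemma E1_integrableOn {c : ℝ} (hc : 0 < c) :
    IntegrableOn (fun t => Real.exp (-t) / t) (Set.Ioi c) := by
  apply integrable_of_isBigO_exp_neg (b := 1) one_pos
  · intro t ht
    exact ((Real.continuous_exp.comp continuous_neg).continuousAt.div continuousAt_id
      (ne_of_gt (lt_of_lt_of_le hc ht))).continuousWithinAt
  · apply Asymptotics.IsBigO.of_bound (1 / c)
    filter_upwards [eventually_ge_atTop c] with t ht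
    have ht0 : 0 < t := lt_of_lt_of_le hc ht
    rw [Real.norm_eq_abs, Real.norm_eq_abs, abs_of_pos (div_pos (Real.exp_pos _) ht0),
      abs_of_pos (Real.exp_pos _), neg_one_mul]
    calc Real.exp (-t) / t ≤ Real.exp (-t) / c :=
          div_le_div_of_nonneg_left (Real.exp_pos _).le hc ht
    _ = 1 / c * Real.exp (-t) := by ring

lemma E1_hasDerivAt {c : ℝ} (hc : 0 < c) : HasDerivAt E1 (-(Real.exp (-c) / c)) c := by
  set w : ℝ := c / 2 with hw
  have hw0 : 0 < w := by positivity
  have hwc : w < c := by rw [hw]; linarith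
  have hint : IntegrableOn (fun t => Real.exp (-t) / t) (Set.Ioi w) := E1_integrableOn hw0
  have hkey : ∀ᶠ x in nhds c, E1 x = E1 w - ∫ t in w..x, Real.exp (-t) / t := by
    filter_upwards [isOpen_Ioi.mem_nhds (show w < c from hwc)] with x hx
    have hwx : w ≤ x := le_of_lt hx
    have hsplit : E1 w = (∫ t in Set.Ioc w x, Real.exp (-t) / t) + E1 x := by
      rw [E1, E1, ← Set.Ioc_union_Ioi_eq_Ioi hwx]
      exact setIntegral_union (Set.Ioc_disjoint_Ioi le_rfl) measurableSet_Ioi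
        (hint.mono_set Set.Ioc_subset_Ioi_self)
        (hint.mono_set (Set.Ioi_subset_Ioi hwx))
    rw [intervalIntegral.integral_of_le hwx]
    linarith [hsplit]
  have hii : IntervalIntegrable (fun t => Real.exp (-t) / t) volume w c := by
    apply ContinuousOn.intervalIntegrable
    intro t ht
    rw [Set.uIcc_of_le hwc.le] at ht
    exact ((Real.continuous_exp.comp continuous_neg).continuousAt.div continuousAt_id
      (ne_of_gt (lt_of_lt_of_le hw0 ht.1))).continuousWithinAt
  have hmeas : StronglyMeasurableAtFilter (fun t => Real.exp (-t) / t) (nhds c) volume :=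
    ((Real.measurable_exp.comp measurable_neg).div
      measurable_id).stronglyMeasurable.stronglyMeasurableAtFilter
  have hca : ContinuousAt (fun t => Real.exp (-t) / t) c :=
    (Real.continuous_exp.comp continuous_neg).continuousAt.div continuousAt_id (ne_of_gt hc)
  have hD := ((intervalIntegral.integral_hasStrictDerivAt_right hii hmeas
    hca).hasDerivAt).const_sub (E1 w)
  exact hD.congr_of_eventuallyEq hkey

lemma E1_nonneg {x : ℝ} (hx : 0 < x) : 0 ≤ E1 x := by
  apply setIntegral_nonneg measurableSet_Ioi
  intro t ht
  have : 0 < t := lt_trans hx ht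
  positivity

lemma E1_tendsto : Tendsto E1 atTop (nhds 0) := by
  refine squeeze_zero_norm' ?_ (show Tendsto (fun x : ℝ => Real.exp (-x)) atTop (nhds 0) from
    Real.tendsto_exp_atBot.comp tendsto_neg_atTop_atBot)
  filter_upwards [eventually_ge_atTop (1 : ℝ)] with x hx
  have hx0 : 0 < x := lt_of_lt_of_le one_pos hx
  rw [Real.norm_eq_abs, abs_of_nonneg (E1_nonneg hx0)]
  have hle : E1 x ≤ ∫ t in Set.Ioi x, Real.exp (-t) := by
    apply setIntegral_mono_on (E1_integrableOn hx0) _ measurableSet_Ioi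
    · intro t ht
      have ht1 : 1 ≤ t := le_trans hx (le_of_lt ht)
      rw [div_le_iff₀ (lt_of_lt_of_le one_pos ht1)]
      nlinarith [Real.exp_pos (-t)]
    · have := exp_neg_integrableOn_Ioi x one_pos
      simpa using this
  rwa [integral_exp_neg_Ioi] at hle

theorem stmt8 (η b : ℝ) (hη : 0 < η) (hb : 0 < b) :
    (∫ x in Set.Ioi (0 : ℝ), x * Real.log (1 + b * x) * Real.exp (-(η * x))) =
      (1 / η ^ 2 - 1 / (b * η)) * Real.exp (η / b) * E1 (η / b) + 1 / η ^ 2 := by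
  have hη' : η ≠ 0 := ne_of_gt hη
  have hb' : b ≠ 0 := ne_of_gt hb
  set F : ℝ → ℝ := fun x =>
    -(x / η + 1 / η ^ 2) * Real.exp (-(η * x)) * Real.log (1 + b * x)
      - (1 / η ^ 2) * Real.exp (-(η * x))
      - ((b - η) / (b * η ^ 2)) * Real.exp (η / b) * E1 (η * x + η / b) with hF
  have hpos : ∀ x : ℝ, 0 ≤ x → 0 < 1 + b * x := fun x hx => by nlinarith
  have hposE : ∀ x : ℝ, 0 ≤ x → 0 < η * x + η / b := fun x hx => by positivity
  -- derivative
  have hderiv : ∀ x ∈ Set.Ici (0:ℝ),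
      HasDerivAt F (x * Real.log (1 + b * x) * Real.exp (-(η * x))) x := by
    intro x hx
    have hx0 : (0:ℝ) ≤ x := hx
    have h1x : (1 + b * x) ≠ 0 := ne_of_gt (hpos x hx0)
    have hEx : (η * x + η / b) ≠ 0 := ne_of_gt (hposE x hx0)
    have hexp : HasDerivAt (fun y : ℝ => Real.exp (-(η * y)))
        (Real.exp (-(η * x)) * (-η)) x := by
      simpa using (((hasDerivAt_id x).const_mul η).neg).exp
    have hlin : HasDerivAt (fun y : ℝ => -(y / η + 1 / η ^ 2)) (-(1/η)) x := by
      exact (((hasDerivAt_id x).div_const η).add_const ((1:ℝ) / η ^ 2)).neg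
    have hlog : HasDerivAt (fun y : ℝ => Real.log (1 + b * y)) (b / (1 + b * x)) x := by
      have h := ((((hasDerivAt_id x).const_mul b).const_add 1).log h1x)
      simpa using h
    have hE : HasDerivAt (fun y : ℝ => E1 (η * y + η / b))
        (-(Real.exp (-(η * x + η / b)) / (η * x + η / b)) * η) x := by
      have hinner : HasDerivAt (fun y : ℝ => η * y + η / b) η x := by
        simpa using (((hasDerivAt_id x).const_mul η).add_const (η / b))
      exact (E1_hasDerivAt (hposE x hx0)).comp x hinner
    have h1 : HasDerivAt
        (fun y => -(y / η + 1 / η ^ 2) * Real.exp (-(η * y)) * Real.log (1 + b * y))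
        (((-(1/η)) * Real.exp (-(η * x)) +
            -(x / η + 1 / η ^ 2) * (Real.exp (-(η * x)) * (-η))) * Real.log (1 + b * x)
          + (-(x / η + 1 / η ^ 2) * Real.exp (-(η * x))) * (b / (1 + b * x))) x :=
      (hlin.mul hexp).mul hlog
    have h2 : HasDerivAt (fun y => (1 / η ^ 2) * Real.exp (-(η * y)))
        ((1 / η ^ 2) * (Real.exp (-(η * x)) * (-η))) x := hexp.const_mul _
    have h3 : HasDerivAt (fun y => ((b - η) / (b * η ^ 2)) * Real.exp (η / b) * E1 (η * y + η / b))
        (((b - η) / (b * η ^ 2)) * Real.exp (η / b) *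
          (-(Real.exp (-(η * x + η / b)) / (η * x + η / b)) * η)) x :=
      hE.const_mul _
    have h := (h1.sub h2).sub h3
    refine h.congr_deriv ?_
    have hsplit : Real.exp (-(η * x + η / b)) = Real.exp (-(η * x)) / Real.exp (η / b) := by
      rw [← Real.exp_sub]; ring_nf
    have hEx2 : η * x + η / b = η * (1 + b * x) / b := by field_simp; ring
    rw [hsplit, hEx2]
    have he1 : Real.exp (η / b) ≠ 0 := Real.exp_ne_zero _
    field_simp
    ring
  -- integrability of the integrand
  have hfint : IntegrableOn (fun x => x * Real.log (1 + b * x) * Real.exp (-(η * x)))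
      (Set.Ioi (0:ℝ)) := by
    have h2 : (0:ℝ) < η / 2 := by positivity
    apply integrable_of_isBigO_exp_neg h2
    · intro x hx
      have hx0 : (0:ℝ) ≤ x := hx
      have hl : ContinuousAt (fun y : ℝ => Real.log (1 + b * y)) x :=
        ContinuousAt.log (by fun_prop) (ne_of_gt (hpos x hx0))
      exact ((continuousAt_id.mul hl).mul (by fun_prop)).continuousWithinAt
    · apply Asymptotics.IsBigO.of_bound 1
      have hbt : Tendsto (fun x : ℝ => b * (x ^ 2 * Real.exp (-(η/2 * x)))) atTop (nhds 0) := by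
        simpa using (tendsto_pow_exp_aux 2 h2).const_mul b
      have hev : ∀ᶠ x : ℝ in atTop, b * (x ^ 2 * Real.exp (-(η/2 * x))) < 1 :=
        hbt.eventually_lt_const one_pos
      filter_upwards [eventually_ge_atTop (0:ℝ), hev] with x hx0 hx1
      have hlog0 : 0 ≤ Real.log (1 + b * x) := Real.log_nonneg (by nlinarith)
      have hlogle : Real.log (1 + b * x) ≤ b * x := by
        have := Real.log_le_sub_one_of_pos (hpos x hx0)
        linarith
      have hesplit : Real.exp (-(η * x)) = Real.exp (-(η/2 * x)) * Real.exp (-(η/2 * x)) := by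
        rw [← Real.exp_add]; ring_nf
      rw [Real.norm_eq_abs, Real.norm_eq_abs, one_mul,
        abs_of_nonneg (by positivity : (0:ℝ) ≤ x * Real.log (1 + b * x) * Real.exp (-(η * x))),
        abs_of_pos (Real.exp_pos _)]
      calc x * Real.log (1 + b * x) * Real.exp (-(η * x))
          ≤ x * (b * x) * Real.exp (-(η * x)) := by
            apply mul_le_mul_of_nonneg_right _ (Real.exp_pos _).le
            exact mul_le_mul_of_nonneg_left hlogle hx0
        _ = (b * (x ^ 2 * Real.exp (-(η/2 * x)))) * Real.exp (-(η/2 * x)) := by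
            rw [hesplit]; ring
        _ ≤ 1 * Real.exp (-(η/2 * x)) :=
            mul_le_mul_of_nonneg_right hx1.le (Real.exp_pos _).le
        _ = Real.exp (-(η/2) * x) := by rw [one_mul, neg_mul]
  -- limit of F at infinity
  have htends : Tendsto F atTop (nhds 0) := by
    have ht2 : Tendsto (fun x : ℝ => (1 / η ^ 2) * Real.exp (-(η * x))) atTop (nhds 0) := by
      have := (tendsto_pow_exp_aux 0 hη).const_mul (1 / η ^ 2)
      simpa using this
    have ht3 : Tendsto (fun x : ℝ => ((b - η) / (b * η ^ 2)) * Real.exp (η / b)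
        * E1 (η * x + η / b)) atTop (nhds 0) := by
      have hcomp : Tendsto (fun x : ℝ => η * x + η / b) atTop atTop :=
        tendsto_atTop_add_const_right _ _ (tendsto_id.const_mul_atTop hη)
      have := (E1_tendsto.comp hcomp).const_mul (((b - η) / (b * η ^ 2)) * Real.exp (η / b))
      simpa [Function.comp, mul_assoc] using this
    have ht1 : Tendsto (fun x : ℝ =>
        -(x / η + 1 / η ^ 2) * Real.exp (-(η * x)) * Real.log (1 + b * x)) atTop (nhds 0) := by
      have hg : Tendsto (fun x : ℝ => (b / η) * (x ^ 2 * Real.exp (-(η * x)))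
          + (b / η ^ 2) * (x ^ 1 * Real.exp (-(η * x)))) atTop (nhds 0) := by
        have := ((tendsto_pow_exp_aux 2 hη).const_mul (b / η)).add
          ((tendsto_pow_exp_aux 1 hη).const_mul (b / η ^ 2))
        simpa using this
      refine squeeze_zero_norm' ?_ hg
      filter_upwards [eventually_ge_atTop (0:ℝ)] with x hx0
      have hlog0 : 0 ≤ Real.log (1 + b * x) := Real.log_nonneg (by nlinarith)
      have hlogle : Real.log (1 + b * x) ≤ b * x := by
        have := Real.log_le_sub_one_of_pos (hpos x hx0)
        linarith
      have hA : 0 ≤ x / η + 1 / η ^ 2 := by positivity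
      rw [Real.norm_eq_abs, abs_mul, abs_mul, abs_neg, abs_of_nonneg hA,
        abs_of_pos (Real.exp_pos _), abs_of_nonneg hlog0]
      calc (x / η + 1 / η ^ 2) * Real.exp (-(η * x)) * Real.log (1 + b * x)
          ≤ (x / η + 1 / η ^ 2) * Real.exp (-(η * x)) * (b * x) := by
            apply mul_le_mul_of_nonneg_left hlogle (by positivity)
        _ = (b / η) * (x ^ 2 * Real.exp (-(η * x)))
            + (b / η ^ 2) * (x ^ 1 * Real.exp (-(η * x))) := by
            field_simp
    have h := (ht1.sub ht2).sub ht3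
    have h0 : ((0:ℝ) - 0) - 0 = 0 := by ring
    rw [h0] at h
    exact h
  have key := integral_Ioi_of_hasDerivAt_of_tendsto' hderiv hfint htends
  rw [key, hF]
  have hE0 : η * 0 + η / b = η / b := by ring
  simp only [hE0, zero_div, mul_zero, neg_zero, add_zero, Real.exp_zero, Real.log_one]
  field_simp
  ring
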